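/- For every integer m ≥ 1, the m-th term of the upper central series of the group U_3 of unitriangular automorphisms of A_3 = K⟨x_1,x_2,x_3⟩ is Z_m(U_3) = { (x_1 + f_1(x_2,x_3), x_2, x_3) : f_1 ∈ S_m }, i.e. it consists exactly of the automorphisms fixing x_2 and x_3 and sending x_1 ↦ x_1 + f_1 with f_1 ∈ S_m. -/

import Mathlib

/- STATEMENT 15: for every integer m ≥ 1, the m-th term of the upper central series of
   the group U₃ of unitriangular automorphisms of A₃ = K⟨x₁,x₂,x₃⟩
   (x₁ = ι K 0, x₂ = ι K 1, x₃ = ι K 2) is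
   Z_m(U₃) = { (x₁ + f₁(x₂,x₃), x₂, x₃) : f₁ ∈ S_m },
   where S₁ = S is the algebra of invariants of the U₂-action on K⟨x₂,x₃⟩ and
   S_{m+1} = { f ∈ K⟨x₂,x₃⟩ : f^φ − f ∈ S_m for every φ in the U₂-action }.
   (Below `SS K m` is the paper's S_m : `SS K 0 = {0}` so that `SS K 1 = S`.) -/

noncomputable section
open FreeAlgebra

abbrev A3 (K : Type) [Field K] := FreeAlgebra K (Fin 3)

private lemma adjoin_x3_stable {K : Type} [Field K]
    (φ : A3 K ≃ₐ[K] A3 K) (d : K)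
    (h3 : φ (ι K 2) = ι K 2 + algebraMap K (A3 K) d) :
    ∀ u ∈ Algebra.adjoin K ({ι K 2} : Set (A3 K)),
      φ u ∈ Algebra.adjoin K ({ι K 2} : Set (A3 K)) := by
  intro u hu
  induction hu using Algebra.adjoin_induction with
  | mem v hv =>
      rcases hv with rfl
      rw [h3]
      exact add_mem (Algebra.self_mem_adjoin_singleton K _) (Subalgebra.algebraMap_mem _ _)
  | algebraMap r => rw [AlgEquiv.commutes]; exact Subalgebra.algebraMap_mem _ _
  | add u v _ _ hu hv => rw [map_add]; exact add_mem hu hv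
  | mul u v _ _ hu hv => rw [map_mul]; exact mul_mem hu hv

private lemma adjoin_x2x3_stable {K : Type} [Field K]
    (φ : A3 K ≃ₐ[K] A3 K) (f2 : A3 K) (d : K)
    (hf2 : f2 ∈ Algebra.adjoin K ({ι K 2} : Set (A3 K)))
    (h2 : φ (ι K 1) = ι K 1 + f2)
    (h3 : φ (ι K 2) = ι K 2 + algebraMap K (A3 K) d) :
    ∀ u ∈ Algebra.adjoin K ({ι K 1, ι K 2} : Set (A3 K)),
      φ u ∈ Algebra.adjoin K ({ι K 1, ι K 2} : Set (A3 K)) := by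
  intro u hu
  have hsub : Algebra.adjoin K ({ι K 2} : Set (A3 K)) ≤
      Algebra.adjoin K ({ι K 1, ι K 2} : Set (A3 K)) :=
    Algebra.adjoin_mono (Set.singleton_subset_iff.mpr (Set.mem_insert_of_mem _ rfl))
  induction hu using Algebra.adjoin_induction with
  | mem v hv =>
      simp only [Set.mem_insert_iff, Set.mem_singleton_iff] at hv
      rcases hv with rfl | rfl
      · rw [h2]
        exact add_mem (Algebra.subset_adjoin (Set.mem_insert _ _)) (hsub hf2)
      · rw [h3]
        exact add_mem (Algebra.subset_adjoin (Set.mem_insert_of_mem _ rfl))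
          (Subalgebra.algebraMap_mem _ _)
  | algebraMap r => rw [AlgEquiv.commutes]; exact Subalgebra.algebraMap_mem _ _
  | add u v _ _ hu hv => rw [map_add]; exact add_mem hu hv
  | mul u v _ _ hu hv => rw [map_mul]; exact mul_mem hu hv

/-- The group `U₃` of unitriangular automorphisms of A₃ = K⟨x₁,x₂,x₃⟩:
x₁ ↦ x₁ + f₁(x₂,x₃), x₂ ↦ x₂ + f₂(x₃), x₃ ↦ x₃ + f₃·1. -/
def U3 (K : Type) [Field K] : Subgroup (A3 K ≃ₐ[K] A3 K) where
  carrier := {φ | ∃ f1 ∈ Algebra.adjoin K ({ι K 1, ι K 2} : Set (A3 K)),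
    ∃ f2 ∈ Algebra.adjoin K ({ι K 2} : Set (A3 K)), ∃ f3 : K,
    φ (ι K 0) = ι K 0 + f1 ∧ φ (ι K 1) = ι K 1 + f2 ∧
    φ (ι K 2) = ι K 2 + algebraMap K (A3 K) f3}
  one_mem' := ⟨0, Subalgebra.zero_mem _, 0, Subalgebra.zero_mem _, 0, by simp, by simp, by simp⟩
  mul_mem' := by
    rintro φ ψ ⟨f1, hf1, f2, hf2, f3, hφ1, hφ2, hφ3⟩ ⟨g1, hg1, g2, hg2, g3, hψ1, hψ2, hψ3⟩
    refine ⟨f1 + φ g1, add_mem hf1 (adjoin_x2x3_stable φ f2 f3 hf2 hφ2 hφ3 g1 hg1),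
      f2 + φ g2, add_mem hf2 (adjoin_x3_stable φ f3 hφ3 g2 hg2), f3 + g3, ?_, ?_, ?_⟩
    · show φ (ψ (ι K 0)) = _
      rw [hψ1, map_add, hφ1, add_assoc]
    · show φ (ψ (ι K 1)) = _
      rw [hψ2, map_add, hφ2, add_assoc]
    · show φ (ψ (ι K 2)) = _
      rw [hψ3, map_add, hφ3, AlgEquiv.commutes, map_add, add_assoc]
  inv_mem' := by
    rintro φ ⟨f1, hf1, f2, hf2, f3, hφ1, hφ2, hφ3⟩
    have hs3 : φ.symm (ι K 2) = ι K 2 + algebraMap K (A3 K) (-f3) := by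
      have h1 := congrArg φ.symm hφ3
      rw [AlgEquiv.symm_apply_apply, map_add, AlgEquiv.commutes] at h1
      rw [eq_sub_of_add_eq h1.symm, map_neg, sub_eq_add_neg]
    have hs2 : φ.symm (ι K 1) = ι K 1 + (-(φ.symm f2)) := by
      have h1 := congrArg φ.symm hφ2
      rw [AlgEquiv.symm_apply_apply, map_add] at h1
      rw [eq_sub_of_add_eq h1.symm, sub_eq_add_neg]
    have hs1 : φ.symm (ι K 0) = ι K 0 + (-(φ.symm f1)) := by
      have h1 := congrArg φ.symm hφ1
      rw [AlgEquiv.symm_apply_apply, map_add] at h1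
      rw [eq_sub_of_add_eq h1.symm, sub_eq_add_neg]
    have hm2 : φ.symm f2 ∈ Algebra.adjoin K ({ι K 2} : Set (A3 K)) :=
      adjoin_x3_stable φ.symm (-f3) hs3 f2 hf2
    exact ⟨-(φ.symm f1),
      neg_mem (adjoin_x2x3_stable φ.symm (-(φ.symm f2)) (-f3) (neg_mem hm2) hs2 hs3 f1 hf1),
      -(φ.symm f2), neg_mem hm2, -f3, hs1, hs2, hs3⟩

/-- `SS K m` is the paper's `S_m` for `m ≥ 1` (with the convention `SS K 0 = {0}`, so
that `SS K 1` is the invariant algebra `S`):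
`S_{m+1} = { f ∈ K⟨x₂,x₃⟩ : f^φ − f ∈ S_m for all φ in the U₂-action on K⟨x₂,x₃⟩ }`,
the U₂-action being the substitutions x₂ ↦ x₂ + g(x₃), x₃ ↦ x₃ + h·1. -/
def SS (K : Type) [Field K] : ℕ → Set (A3 K)
  | 0 => {0}
  | m + 1 => {f | f ∈ Algebra.adjoin K ({ι K 1, ι K 2} : Set (A3 K)) ∧
      ∀ g ∈ Algebra.adjoin K ({ι K 2} : Set (A3 K)), ∀ h : K,
        (FreeAlgebra.lift K ![ι K 0, ι K 1 + g, ι K 2 + algebraMap K (A3 K) h]) f - f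
          ∈ SS K m}

/-! By induction on `m`, `Z_m(U₃)` is the group of shifts `x₁ ↦ x₁ + f`, `f ∈ S_m`. The commutator
of the shift by `f` with `y ∈ U₃` is the shift by `f - f^y`, so shifts by `S_{m+1}` lie in
`Z_{m+1}`. Conversely, if every commutator `[φ, y]` is a shift by `S_m`, then `φ` and `y` commute
on `x₂` and commute on `x₁` modulo `S_m`. Testing this against `(x₁, x₂ + x₃, x₃)`,
`(x₁, x₂, x₃ + 1)`, `(x₁ + x₂², x₂, x₃)` and `(x₁, x₂ + g(x₃), x₃ + h)` forces `φ` to fix `x₂`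
and `x₃` and to shift `x₁` by an element of `S_{m+1}`. The third test needs characteristic zero: since
`p(x₃ + 1) - p(x₃)` has degree exactly `deg p - 1`, the `x₃`-part of an element of `S_m` has degree
`< m`, so no element of `S_m` is `a x₂ + b` with `a ≠ 0`. -/

open Polynomial

namespace Polynomial

variable {R : Type*} [CommRing R]

theorem coeff_taylor_sub_self_natDegree_sub_one (p : R[X]) (r : R) (hp : 1 ≤ p.natDegree) :
    (taylor r p - p).coeff (p.natDegree - 1) = p.natDegree * r * p.leadingCoeff := by
  set n := p.natDegree
  have hq : (hasseDeriv (n - 1) p).natDegree ≤ 1 := by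
    have := natDegree_hasseDeriv_le p (n - 1)
    omega
  have hq0 : (hasseDeriv (n - 1) p).coeff 0 = p.coeff (n - 1) := by simp [hasseDeriv_coeff]
  have hq1 : (hasseDeriv (n - 1) p).coeff 1 = n * p.coeff n := by
    rw [hasseDeriv_coeff, show 1 + (n - 1) = n by omega, ← Nat.choose_symm (by omega),
      show n - (n - 1) = 1 by omega, Nat.choose_one_right]
  rw [coeff_sub, taylor_coeff, eq_X_add_C_of_natDegree_le_one hq, hq0, hq1]
  simp only [eval_add, eval_mul, eval_C, eval_X, leadingCoeff]
  ring

theorem degree_lt_succ_of_degree_taylor_sub_self_lt [IsDomain R] [CharZero R] {p : R[X]} {r : R}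
    (hr : r ≠ 0) {k : ℕ} (h : (taylor r p - p).degree < k) : p.degree < ↑(k + 1) := by
  rcases eq_or_ne p 0 with rfl | hp
  · simp
  rw [← natDegree_lt_iff_degree_lt hp]
  by_contra! hk
  have hcoeff : (taylor r p - p).coeff (p.natDegree - 1) ≠ 0 := by
    rw [coeff_taylor_sub_self_natDegree_sub_one p r (by omega)]
    exact mul_ne_zero (mul_ne_zero (Nat.cast_ne_zero.mpr (by omega)) hr)
      (leadingCoeff_ne_zero.mpr hp)
  have := (le_degree_of_ne_zero hcoeff).trans_lt h
  norm_cast at this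
  omega

theorem eq_C_of_taylor_eq_self [IsDomain R] [CharZero R] {p : R[X]} {r : R} (hr : r ≠ 0)
    (h : taylor r p = p) : p = C (p.coeff 0) :=
  eq_C_of_degree_le_zero <| Order.le_of_lt_succ <|
    degree_lt_succ_of_degree_taylor_sub_self_lt (k := 0) hr (by simp [h])

end Polynomial

namespace Unitriangular

variable {K : Type} [Field K]

abbrev adjoinX23 (K : Type) [Field K] : Subalgebra K (A3 K) :=
  Algebra.adjoin K {ι K 1, ι K 2}

abbrev adjoinX3 (K : Type) [Field K] : Subalgebra K (A3 K) :=
  Algebra.adjoin K {ι K 2}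

lemma x2_mem_adjoinX23 : ι K 1 ∈ adjoinX23 K :=
  Algebra.subset_adjoin (Set.mem_insert _ _)

lemma x3_mem_adjoinX23 : ι K 2 ∈ adjoinX23 K :=
  Algebra.subset_adjoin (Set.mem_insert_of_mem _ rfl)

lemma x3_mem_adjoinX3 : ι K 2 ∈ adjoinX3 K :=
  Algebra.self_mem_adjoin_singleton K _

lemma mem_adjoinX3_iff {u : A3 K} : u ∈ adjoinX3 K ↔ ∃ q : K[X], aeval (ι K 2) q = u := by
  rw [adjoinX3, Algebra.adjoin_singleton_eq_range_aeval]; rfl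

lemma eqOn_adjoinX23 {B : Type} [Semiring B] [Algebra K B] {F G : A3 K →ₐ[K] B}
    (h1 : F (ι K 1) = G (ι K 1)) (h2 : F (ι K 2) = G (ι K 2)) :
    Set.EqOn F G (adjoinX23 K) :=
  AlgHom.eqOn_adjoin_iff.mpr (by simp [Set.EqOn, h1, h2])

lemma eqOn_adjoinX3 {B : Type} [Semiring B] [Algebra K B] {F G : A3 K →ₐ[K] B}
    (h2 : F (ι K 2) = G (ι K 2)) : Set.EqOn F G (adjoinX3 K) :=
  AlgHom.eqOn_adjoin_iff.mpr (by simp [h2])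

lemma apply_eq_self_of_mem_adjoinX23 {φ : A3 K ≃ₐ[K] A3 K} (h1 : φ (ι K 1) = ι K 1)
    (h2 : φ (ι K 2) = ι K 2) {u : A3 K} (hu : u ∈ adjoinX23 K) : φ u = u :=
  eqOn_adjoinX23 (F := φ.toAlgHom) (G := AlgHom.id K _) h1 h2 hu

lemma algEquiv_ext {φ ψ : A3 K ≃ₐ[K] A3 K} (h0 : φ (ι K 0) = ψ (ι K 0))
    (h1 : φ (ι K 1) = ψ (ι K 1)) (h2 : φ (ι K 2) = ψ (ι K 2)) : φ = ψ :=
  AlgEquiv.coe_toAlgHom_injective <| FreeAlgebra.hom_ext <| funext fun i => by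
    fin_cases i <;> assumption

/-- The action of `(g, h) ∈ U₂`, extended to `A₃` by fixing `x₁`. -/
def u2Subst (g : A3 K) (h : K) : A3 K →ₐ[K] A3 K :=
  lift K ![ι K 0, ι K 1 + g, ι K 2 + algebraMap K (A3 K) h]

@[simp] lemma u2Subst_x1 (g : A3 K) (h : K) : u2Subst g h (ι K 0) = ι K 0 := by
  simp [u2Subst]

@[simp] lemma u2Subst_x2 (g : A3 K) (h : K) : u2Subst g h (ι K 1) = ι K 1 + g := by
  simp [u2Subst]

@[simp] lemma u2Subst_x3 (g : A3 K) (h : K) :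
    u2Subst g h (ι K 2) = ι K 2 + algebraMap K (A3 K) h := by
  simp [u2Subst]

lemma u2Subst_aeval (g : A3 K) (h : K) (q : K[X]) :
    u2Subst g h (aeval (ι K 2) q) = aeval (ι K 2) (taylor h q) := by
  rw [← Polynomial.aeval_algHom_apply, taylor_apply, aeval_comp]
  simp

def toPolyX3 : A3 K →ₐ[K] K[X] :=
  lift K ![0, 0, X]

lemma toPolyX3_aeval (q : K[X]) : toPolyX3 (aeval (ι K 2) q) = q := by
  rw [← Polynomial.aeval_algHom_apply]
  simp [toPolyX3]

lemma toPolyX3_u2Subst_zero (h : K) (u : A3 K) :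
    toPolyX3 (u2Subst 0 h u) = taylor h (toPolyX3 u) := by
  have : toPolyX3.comp (u2Subst 0 h) = (taylorAlgHom h).comp toPolyX3 :=
    FreeAlgebra.hom_ext <| funext fun i => by fin_cases i <;> simp [toPolyX3]
  exact congr($this u)

lemma mem_SS_succ {m : ℕ} {f : A3 K} :
    f ∈ SS K (m + 1) ↔ f ∈ adjoinX23 K ∧ ∀ g ∈ adjoinX3 K, ∀ h : K, u2Subst g h f - f ∈ SS K m :=
  Iff.rfl

lemma SS_subset_adjoinX23 : ∀ m, SS K m ⊆ adjoinX23 K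
  | 0, _, rfl => zero_mem _
  | _ + 1, _, hf => hf.1

lemma neg_mem_SS : ∀ {m : ℕ} {f : A3 K}, f ∈ SS K m → -f ∈ SS K m
  | 0, _, rfl => neg_zero
  | _ + 1, f, ⟨hf, hsub⟩ => ⟨neg_mem hf, fun g hg h => by
      simpa only [map_neg, neg_sub_neg, neg_sub] using neg_mem_SS (hsub g hg h)⟩

lemma degree_toPolyX3_lt_of_mem_SS [CharZero K] :
    ∀ {m : ℕ} {f : A3 K}, f ∈ SS K m → (toPolyX3 f).degree < m
  | 0, _, rfl => by simp
  | _ + 1, f, hf => by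
    have := degree_toPolyX3_lt_of_mem_SS ((mem_SS_succ.mp hf).2 0 (zero_mem _) 1)
    rw [map_sub, toPolyX3_u2Subst_zero] at this
    exact degree_lt_succ_of_degree_taylor_sub_self_lt one_ne_zero this

/-- `x₂ ↦ x₂ + x₃ᵐ⁺¹` moves `a x₂ + b` by `a x₃ᵐ⁺¹`, whose `x₃`-degree is too large for `S_m`. -/
lemma eq_zero_of_algebraMap_mul_x2_add_mem_SS [CharZero K] (a b : K) :
    ∀ {m : ℕ}, algebraMap K (A3 K) a * ι K 1 + algebraMap K (A3 K) b ∈ SS K m → a = 0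
  | 0, h => by
    simpa using congr((lift K ![(0 : K[X]), X, 0] $h).coeff 1)
  | m + 1, h => by
    by_contra ha
    have hmem := (mem_SS_succ.mp h).2 (ι K 2 ^ (m + 1)) (pow_mem x3_mem_adjoinX3 _) 0
    have hdeg := degree_toPolyX3_lt_of_mem_SS hmem
    have : toPolyX3 (u2Subst (ι K 2 ^ (m + 1)) 0
        (algebraMap K (A3 K) a * ι K 1 + algebraMap K (A3 K) b)
        - (algebraMap K (A3 K) a * ι K 1 + algebraMap K (A3 K) b)) = C a * X ^ (m + 1) := by
      simp [toPolyX3]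
    rw [this, degree_C_mul_X_pow _ ha] at hdeg
    exact (lt_irrefl _ (hdeg.trans (by exact_mod_cast Nat.lt_succ_self m)))

lemma exists_eq_algebraMap_of_u2Subst_eq_self [CharZero K] {u : A3 K} (hu : u ∈ adjoinX3 K)
    (h : u2Subst 0 1 u = u) : ∃ c : K, u = algebraMap K (A3 K) c := by
  obtain ⟨q, rfl⟩ := mem_adjoinX3_iff.mp hu
  have hq : taylor 1 q = q := by
    simpa [toPolyX3_aeval, toPolyX3_u2Subst_zero] using congr(toPolyX3 $h)
  exact ⟨q.coeff 0, by
    conv_lhs => rw [eq_C_of_taylor_eq_self one_ne_zero hq]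
    rw [aeval_C]⟩

/-- The inverse of `(x₁, x₂ + q(x₃), x₃ + h)` is `(x₁, x₂ - q(x₃ - h), x₃ - h)`. -/
def u2Equiv (q : K[X]) (h : K) : A3 K ≃ₐ[K] A3 K :=
  AlgEquiv.ofAlgHom (u2Subst (aeval (ι K 2) q) h) (u2Subst (-aeval (ι K 2) (taylor (-h) q)) (-h))
    (FreeAlgebra.hom_ext <| funext fun i => by
      fin_cases i <;> simp [u2Subst_aeval, taylor_taylor])
    (FreeAlgebra.hom_ext <| funext fun i => by
      fin_cases i <;> simp [u2Subst_aeval])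

lemma u2Equiv_apply (q : K[X]) (h : K) (u : A3 K) :
    u2Equiv q h u = u2Subst (aeval (ι K 2) q) h u :=
  rfl

lemma u2Equiv_mem_U3 (q : K[X]) (h : K) : u2Equiv q h ∈ U3 K :=
  ⟨0, zero_mem _, aeval (ι K 2) q, mem_adjoinX3_iff.mpr ⟨q, rfl⟩, h,
    by simp [u2Equiv_apply], by simp [u2Equiv_apply], by simp [u2Equiv_apply]⟩

def x1ShiftHom (f : A3 K) : A3 K →ₐ[K] A3 K :=
  lift K ![ι K 0 + f, ι K 1, ι K 2]

@[simp] lemma x1ShiftHom_x1 (f : A3 K) : x1ShiftHom f (ι K 0) = ι K 0 + f := by simp [x1ShiftHom]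
@[simp] lemma x1ShiftHom_x2 (f : A3 K) : x1ShiftHom f (ι K 1) = ι K 1 := by simp [x1ShiftHom]
@[simp] lemma x1ShiftHom_x3 (f : A3 K) : x1ShiftHom f (ι K 2) = ι K 2 := by simp [x1ShiftHom]

lemma x1ShiftHom_apply_of_mem {f u : A3 K} (hu : u ∈ adjoinX23 K) : x1ShiftHom f u = u :=
  eqOn_adjoinX23 (G := AlgHom.id K _) (by simp) (by simp) hu

def x1Shift (f : A3 K) (hf : f ∈ adjoinX23 K) : A3 K ≃ₐ[K] A3 K :=
  AlgEquiv.ofAlgHom (x1ShiftHom f) (x1ShiftHom (-f))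
    (FreeAlgebra.hom_ext <| funext fun i => by
      fin_cases i <;> simp [x1ShiftHom_apply_of_mem hf])
    (FreeAlgebra.hom_ext <| funext fun i => by
      fin_cases i <;> simp [x1ShiftHom_apply_of_mem hf])

lemma x1Shift_apply (f : A3 K) (hf : f ∈ adjoinX23 K) (u : A3 K) :
    x1Shift f hf u = x1ShiftHom f u :=
  rfl

lemma x1Shift_mem_U3 (f : A3 K) (hf : f ∈ adjoinX23 K) : x1Shift f hf ∈ U3 K :=
  ⟨f, hf, 0, zero_mem _, 0, by simp [x1Shift_apply], by simp [x1Shift_apply],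
    by simp [x1Shift_apply]⟩

def x1Shifts (S : Set (A3 K)) : Set (A3 K ≃ₐ[K] A3 K) :=
  {φ | ∃ f ∈ S, φ (ι K 0) = ι K 0 + f ∧ φ (ι K 1) = ι K 1 ∧ φ (ι K 2) = ι K 2}

lemma apply_mem_adjoinX23_of_mem_U3 {y : A3 K ≃ₐ[K] A3 K} (hy : y ∈ U3 K) {u : A3 K}
    (hu : u ∈ adjoinX23 K) : y u ∈ adjoinX23 K := by
  obtain ⟨-, -, g, hg, h, -, hy1, hy2⟩ := hy
  exact adjoin_x2x3_stable y g h hg hy1 hy2 u hu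

lemma apply_x1_sub_mem_adjoinX23_of_mem_U3 {y : A3 K ≃ₐ[K] A3 K} (hy : y ∈ U3 K) :
    y (ι K 0) - ι K 0 ∈ adjoinX23 K := by
  obtain ⟨f, hf, -, -, -, hy0, -, -⟩ := hy
  simpa [hy0] using hf

lemma exists_eqOn_u2Subst_of_mem_U3 {y : A3 K ≃ₐ[K] A3 K} (hy : y ∈ U3 K) :
    ∃ g ∈ adjoinX3 K, ∃ h : K, Set.EqOn y (u2Subst g h) (adjoinX23 K) := by
  obtain ⟨-, -, g, hg, h, -, hy1, hy2⟩ := hy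
  exact ⟨g, hg, h, eqOn_adjoinX23 (F := y.toAlgHom) (by simpa using hy1) (by simpa using hy2)⟩

lemma apply_comm_of_commutator_mem_x1Shifts {S : Set (A3 K)} {φ y : A3 K ≃ₐ[K] A3 K}
    (hφ : φ ∈ U3 K) (hy : y ∈ U3 K) (h : φ * y * φ⁻¹ * y⁻¹ ∈ x1Shifts S) :
    φ (y (ι K 1)) = y (φ (ι K 1)) ∧ φ (y (ι K 0)) - y (φ (ι K 0)) ∈ S := by
  obtain ⟨e, he, hσ0, hσ1, hσ2⟩ := h
  have hσ (u : A3 K) : (φ * y * φ⁻¹ * y⁻¹) (y (φ u)) = φ (y u) :=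
    congr($(show φ * y * φ⁻¹ * y⁻¹ * (y * φ) = φ * y by group) u)
  have hfix {u : A3 K} (hu : u ∈ adjoinX23 K) : (φ * y * φ⁻¹ * y⁻¹) u = u :=
    apply_eq_self_of_mem_adjoinX23 hσ1 hσ2 hu
  have hw : y (φ (ι K 0)) - ι K 0 ∈ adjoinX23 K := by
    have := add_mem (apply_mem_adjoinX23_of_mem_U3 hy (apply_x1_sub_mem_adjoinX23_of_mem_U3 hφ))
      (apply_x1_sub_mem_adjoinX23_of_mem_U3 hy)
    rwa [map_sub, sub_add_sub_cancel] at this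
  constructor
  · rw [← hσ, hfix (apply_mem_adjoinX23_of_mem_U3 hy
      (apply_mem_adjoinX23_of_mem_U3 hφ x2_mem_adjoinX23))]
  have hx1 : y (φ (ι K 0)) = ι K 0 + (y (φ (ι K 0)) - ι K 0) := by abel
  rw [← hσ, hx1, map_add, hσ0, hfix hw]
  convert he using 1
  abel

lemma commutator_mem_x1Shifts {m : ℕ} {φ y : A3 K ≃ₐ[K] A3 K} (hφ : φ ∈ x1Shifts (SS K (m + 1)))
    (hy : y ∈ U3 K) : φ * y * φ⁻¹ * y⁻¹ ∈ x1Shifts (SS K m) := by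
  obtain ⟨f, hf, hφ0, hφ1, hφ2⟩ := hφ
  have hf23 := SS_subset_adjoinX23 _ hf
  have hyf := apply_mem_adjoinX23_of_mem_U3 hy hf23
  have hφfix {u : A3 K} (hu : u ∈ adjoinX23 K) : φ u = u :=
    apply_eq_self_of_mem_adjoinX23 hφ1 hφ2 hu
  set θ := x1Shift (f - y f) (sub_mem hf23 hyf)
  have hθfix {u : A3 K} (hu : u ∈ adjoinX23 K) : θ u = u := x1ShiftHom_apply_of_mem hu
  have hθ : θ * (y * φ) = φ * y := by
    obtain ⟨w, hw, hyx1⟩ : ∃ w ∈ adjoinX23 K, y (ι K 0) = ι K 0 + w :=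
      ⟨_, apply_x1_sub_mem_adjoinX23_of_mem_U3 hy, by abel⟩
    have hyx2 := apply_mem_adjoinX23_of_mem_U3 hy x2_mem_adjoinX23
    have hyx3 := apply_mem_adjoinX23_of_mem_U3 hy x3_mem_adjoinX23
    apply algEquiv_ext <;> simp only [AlgEquiv.mul_apply]
    · rw [hφ0, map_add, hyx1, add_assoc, map_add, x1Shift_apply, x1ShiftHom_x1,
        hθfix (add_mem hw hyf), map_add, hφ0, hφfix hw]
      abel
    · rw [hφ1, hθfix hyx2, hφfix hyx2]
    · rw [hφ2, hθfix hyx3, hφfix hyx3]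
  have hσ : φ * y * φ⁻¹ * y⁻¹ = θ := by
    rw [← hθ]
    group
  obtain ⟨g, hg, h, hyg⟩ := exists_eqOn_u2Subst_of_mem_U3 hy
  have he : f - y f ∈ SS K m := by
    rw [hyg hf23, ← neg_sub]
    exact neg_mem_SS ((mem_SS_succ.mp hf).2 g hg h)
  rw [hσ]
  exact ⟨f - y f, he, by simp [θ, x1Shift_apply], by simp [θ, x1Shift_apply],
    by simp [θ, x1Shift_apply]⟩

lemma fixes_x2_x3_of_forall_apply_comm [CharZero K] {m : ℕ} {φ : A3 K ≃ₐ[K] A3 K}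
    (hφ : φ ∈ U3 K)
    (H : ∀ y ∈ U3 K, φ (y (ι K 1)) = y (φ (ι K 1)) ∧ φ (y (ι K 0)) - y (φ (ι K 0)) ∈ SS K m) :
    φ (ι K 1) = ι K 1 ∧ φ (ι K 2) = ι K 2 := by
  obtain ⟨f1, hf1, f2, hf2, f3, hφ0, hφ1, hφ2⟩ := hφ
  have hφ2' : φ (ι K 2) = ι K 2 := by
    have hfix : u2Subst (ι K 2) 0 f2 = f2 :=
      eqOn_adjoinX3 (G := AlgHom.id K _) (by simp) hf2
    have := (H _ (u2Equiv_mem_U3 X 0)).1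
    simp only [u2Equiv_apply, aeval_X, u2Subst_x2, map_add, hφ1, hφ2, hfix] at this
    rw [hφ2, ← sub_eq_zero, ← sub_eq_zero.mpr this]
    abel
  obtain ⟨c, rfl⟩ : ∃ c, f2 = algebraMap K _ c := by
    have := (H _ (u2Equiv_mem_U3 0 1)).1
    simp only [u2Equiv_apply, map_zero, u2Subst_x2, add_zero, hφ1, map_add, add_right_inj] at this
    exact exists_eq_algebraMap_of_u2Subst_eq_self hf2 this.symm
  have hc : c = 0 := by
    have := (H _ (x1Shift_mem_U3 (ι K 1 * ι K 1) (mul_mem x2_mem_adjoinX23 x2_mem_adjoinX23))).2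
    simp only [x1Shift_apply, x1ShiftHom_x1, map_add, map_mul, hφ0, hφ1,
      x1ShiftHom_apply_of_mem hf1] at this
    have hform : ι K 0 + f1 + (ι K 1 + algebraMap K _ c) * (ι K 1 + algebraMap K _ c)
        - (ι K 0 + ι K 1 * ι K 1 + f1)
        = algebraMap K (A3 K) (2 * c) * ι K 1 + algebraMap K (A3 K) (c * c) := by
      rw [add_mul, mul_add, mul_add, ← Algebra.commutes c (ι K 1), map_mul, map_mul, map_ofNat]
      noncomm_ring
    rw [hform] at this
    exact (mul_eq_zero.mp (eq_zero_of_algebraMap_mul_x2_add_mem_SS _ _ this)).resolve_left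
      two_ne_zero
  simp [hφ1, hc, hφ2']

lemma mem_SS_succ_of_forall_apply_comm {m : ℕ} {φ : A3 K ≃ₐ[K] A3 K} {f : A3 K}
    (hf : f ∈ adjoinX23 K) (hφ0 : φ (ι K 0) = ι K 0 + f)
    (H : ∀ y ∈ U3 K, φ (y (ι K 0)) - y (φ (ι K 0)) ∈ SS K m) :
    f ∈ SS K (m + 1) := by
  refine ⟨hf, fun g hg h => ?_⟩
  obtain ⟨q, rfl⟩ := mem_adjoinX3_iff.mp hg
  have := H _ (u2Equiv_mem_U3 q h)
  rw [u2Equiv_apply, u2Subst_x1, hφ0, u2Equiv_apply, map_add, u2Subst_x1] at this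
  rw [← neg_sub]
  refine neg_mem_SS ?_
  convert this using 1
  abel

lemma mem_x1Shifts_of_forall_commutator_mem [CharZero K] {m : ℕ} {φ : A3 K ≃ₐ[K] A3 K}
    (hφ : φ ∈ U3 K) (H : ∀ y ∈ U3 K, φ * y * φ⁻¹ * y⁻¹ ∈ x1Shifts (SS K m)) :
    φ ∈ x1Shifts (SS K (m + 1)) := by
  have H' y (hy : y ∈ U3 K) := apply_comm_of_commutator_mem_x1Shifts hφ hy (H y hy)
  obtain ⟨hφ1, hφ2⟩ := fixes_x2_x3_of_forall_apply_comm hφ H'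
  obtain ⟨f, hf, -, -, -, hφ0, -, -⟩ := hφ
  exact ⟨f, mem_SS_succ_of_forall_apply_comm hf hφ0 fun y hy => (H' y hy).2,
    hφ0, hφ1, hφ2⟩

theorem mem_upperCentralSeries_U3_iff [CharZero K] :
    ∀ (m : ℕ) (φ : U3 K),
      φ ∈ Subgroup.upperCentralSeries (U3 K) m ↔ (φ : A3 K ≃ₐ[K] A3 K) ∈ x1Shifts (SS K m)
  | 0, φ => by
    rw [Subgroup.upperCentralSeries_zero, Subgroup.mem_bot, ← Subtype.coe_inj,
      OneMemClass.coe_one]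
    constructor
    · intro h
      exact ⟨0, rfl, by simp [h], by simp [h], by simp [h]⟩
    · rintro ⟨_, rfl, h0, h1, h2⟩
      exact algEquiv_ext (by simpa using h0) h1 h2
  | m + 1, φ => by
    simp only [Subgroup.mem_upperCentralSeries_succ_iff, mem_upperCentralSeries_U3_iff m,
      Subtype.forall]
    exact ⟨mem_x1Shifts_of_forall_commutator_mem φ.2,
      fun hφ y hy => commutator_mem_x1Shifts hφ hy⟩

end Unitriangular

theorem upperCentralSeries_U3_general (K : Type) [Field K] [CharZero K] (m : ℕ)
    (φ : U3 K) :
    φ ∈ upperCentralSeries ↥(U3 K) m ↔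
      ∃ f1 ∈ SS K m,
        (φ : A3 K ≃ₐ[K] A3 K) (ι K 0) = ι K 0 + f1 ∧
        (φ : A3 K ≃ₐ[K] A3 K) (ι K 1) = ι K 1 ∧
        (φ : A3 K ≃ₐ[K] A3 K) (ι K 2) = ι K 2 :=
  Unitriangular.mem_upperCentralSeries_U3_iff m φ

theorem upperCentralSeries_U3 (K : Type) [Field K] [CharZero K] (m : ℕ) (hm : 1 ≤ m)
    (φ : U3 K) :
    φ ∈ upperCentralSeries ↥(U3 K) m ↔
      ∃ f1 ∈ SS K m,
        (φ : A3 K ≃ₐ[K] A3 K) (ι K 0) = ι K 0 + f1 ∧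
        (φ : A3 K ≃ₐ[K] A3 K) (ι K 1) = ι K 1 ∧
        (φ : A3 K ≃ₐ[K] A3 K) (ι K 2) = ι K 2 :=
  upperCentralSeries_U3_general K m φ
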